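/- arXiv:2309.15743 — 2 statements merged into one kernel-verified Lean document; each statement's English description precedes it below -/
import Mathlib

section
/- Let G₀, G₁, W be bounded linear operators on BC(ℝ; ℝⁿ) and suppose G₀ maps BC¹(ℝ;ℝⁿ) to itself with (G₀v)'(t) = (W v)(t) + (G₁ v')(t) for every v ∈ BC¹(ℝ;ℝⁿ). Assume ‖G₀‖ < 1 and ‖G₁‖ < 1. Then there exists σ ∈ (0,1) such that G₀ is a contraction on BC¹(ℝ;ℝⁿ) equipped with the norm ‖v‖_σ = ‖v‖_∞ + σ‖v'‖_∞, with contraction constant γ = max{‖G₀‖ + σ‖W‖, ‖G₁‖} < 1; consequently I − G₀ is bijective on BC¹(ℝ;ℝⁿ) and ‖(I − G₀)⁻¹v‖_{BC¹} ≤ (σ(1−γ))⁻¹ ‖v‖_{BC¹}. -/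
open BoundedContinuousFunction Filter Topology

set_option maxHeartbeats 1000000 in
set_option synthInstance.maxHeartbeats 400000 in
lemma aux_closed (n : ℕ) (σ : ℝ) :
    IsClosed {p : BoundedContinuousFunction ℝ (EuclideanSpace ℝ (Fin n)) ×
        BoundedContinuousFunction ℝ (EuclideanSpace ℝ (Fin n)) |
      ∀ t, HasDerivAt (⇑p.1) ((σ⁻¹ • p.2) t) t} := by
  apply IsSeqClosed.isClosed
  intro f p hf hfp
  have h1 : Tendsto (fun k => (f k).1) atTop (𝓝 p.1) :=
    ((continuous_fst.tendsto p).comp hfp)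
  have h2 : Tendsto (fun k => σ⁻¹ • (f k).2) atTop (𝓝 (σ⁻¹ • p.2)) :=
    ((continuous_const_smul (σ⁻¹ : ℝ)).tendsto p.2).comp ((continuous_snd.tendsto p).comp hfp)
  rw [tendsto_iff_tendstoUniformly] at h1 h2
  intro t
  exact hasDerivAt_of_tendstoUniformly h2
    (Eventually.of_forall fun k x => by simpa using hf k x)
    (fun x => h1.tendsto_at x) t

abbrev EE (n : ℕ) := BoundedContinuousFunction ℝ (EuclideanSpace ℝ (Fin n))

noncomputable def TT {n : ℕ} (G₀ G₁ W : EE n →L[ℝ] EE n) (σ : ℝ) (h h' : EE n)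
    (p : EE n × EE n) : EE n × EE n :=
  (h + G₀ p.1, σ • (h' + W p.1 + G₁ (σ⁻¹ • p.2)))

set_option maxHeartbeats 1000000 in
set_option synthInstance.maxHeartbeats 400000 in
lemma aux_solve {n : ℕ} (G₀ G₁ W : EE n →L[ℝ] EE n)
    (hderiv : ∀ v v' : EE n,
      (∀ t, HasDerivAt (⇑v) (v' t) t) →
      ∀ t, HasDerivAt (⇑(G₀ v)) ((W v + G₁ v') t) t)
    (σ : ℝ) (hσ0 : 0 < σ)
    (hA : ‖G₀‖ + σ * ‖W‖ < 1) (hB : ‖G₁‖ + σ * ‖W‖ < 1)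
    (h h' : EE n)
    (hh : ∀ t, HasDerivAt (⇑h) (h' t) t) :
    ∃ v v' : EE n,
      (∀ t, HasDerivAt (⇑v) (v' t) t) ∧ v - G₀ v = h ∧
      ∀ w w' : EE n,
        (∀ t, HasDerivAt (⇑w) (w' t) t) → w - G₀ w = h → w = v := by
  classical
  have hσ : σ ≠ 0 := hσ0.ne'
  have hcancel : ∀ u : EE n, σ⁻¹ • (σ • u) = u := fun u => by
    rw [smul_smul, inv_mul_cancel₀ hσ, one_smul]
  set S : Set (EE n × EE n) := {p | ∀ t, HasDerivAt (⇑p.1) ((σ⁻¹ • p.2) t) t} with hS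
  have hSclosed : IsClosed S := aux_closed n σ
  haveI : CompleteSpace S := hSclosed.completeSpace_coe
  have hmaps : ∀ p ∈ S, TT G₀ G₁ W σ h h' p ∈ S := by
    intro p hp t
    show HasDerivAt (⇑(h + G₀ p.1))
      ((σ⁻¹ • (σ • (h' + W p.1 + G₁ (σ⁻¹ • p.2)))) t) t
    rw [hcancel (h' + W p.1 + G₁ (σ⁻¹ • p.2))]
    have hd := (hh t).add (hderiv p.1 (σ⁻¹ • p.2) hp t)
    have hval : (h' + W p.1 + G₁ (σ⁻¹ • p.2)) t
        = h' t + (W p.1 + G₁ (σ⁻¹ • p.2)) t := by simp [add_assoc]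
    rw [hval]
    exact hd
  haveI : Nonempty S := ⟨⟨(h, σ • h'), fun t => by
    show HasDerivAt (⇑h) ((σ⁻¹ • (σ • h')) t) t
    rw [hcancel h']
    exact hh t⟩⟩
  set F : S → S := fun p => ⟨TT G₀ G₁ W σ h h' p.1, hmaps p.1 p.2⟩ with hF
  set K : NNReal := ⟨max (‖G₀‖ + σ * ‖W‖) (‖G₁‖ + σ * ‖W‖), by positivity⟩ with hKdef
  have hK1 : (K : ℝ) < 1 := max_lt hA hB
  have hK0 : (0:ℝ) ≤ (K : ℝ) := K.coe_nonneg
  have hCW : ContractingWith K F := by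
    refine ⟨by exact_mod_cast hK1, LipschitzWith.of_dist_le_mul fun p q => ?_⟩
    have hFp : (F p : EE n × EE n) = TT G₀ G₁ W σ h h' p.1 := rfl
    have hFq : (F q : EE n × EE n) = TT G₀ G₁ W σ h h' q.1 := rfl
    rw [Subtype.dist_eq, Subtype.dist_eq, hFp, hFq, Prod.dist_eq, Prod.dist_eq]
    obtain ⟨⟨a, b⟩, -⟩ := p
    obtain ⟨⟨c, d⟩, -⟩ := q
    simp only [TT]
    have hd1 : dist a c ≤ max (dist a c) (dist b d) := le_max_left _ _
    have hd2 : dist b d ≤ max (dist a c) (dist b d) := le_max_right _ _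
    have hdn1 : (0:ℝ) ≤ dist a c := dist_nonneg
    have hdn2 : (0:ℝ) ≤ dist b d := dist_nonneg
    set D := max (dist a c) (dist b d) with hD
    have hD0 : 0 ≤ D := le_trans hdn1 hd1
    have hW0 : (0:ℝ) ≤ σ * ‖W‖ := by positivity
    apply max_le
    · rw [dist_eq_norm]
      have e : (h + G₀ a) - (h + G₀ c) = G₀ (a - c) := by rw [map_sub]; abel
      rw [e]
      calc ‖G₀ (a - c)‖ ≤ ‖G₀‖ * ‖a - c‖ := G₀.le_opNorm _
        _ ≤ (K : ℝ) * D := by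
            rw [← dist_eq_norm]
            have hKge : ‖G₀‖ ≤ (K : ℝ) := by
              show ‖G₀‖ ≤ max (‖G₀‖ + σ * ‖W‖) (‖G₁‖ + σ * ‖W‖)
              have := le_max_left (‖G₀‖ + σ * ‖W‖) (‖G₁‖ + σ * ‖W‖)
              linarith
            exact mul_le_mul hKge hd1 hdn1 hK0
    · rw [dist_eq_norm]
      have key : (σ • (h' + W a + G₁ (σ⁻¹ • b))) - (σ • (h' + W c + G₁ (σ⁻¹ • d)))
          = σ • (W (a - c)) + G₁ (b - d) := by
        rw [← smul_sub σ (h' + W a + G₁ (σ⁻¹ • b)) (h' + W c + G₁ (σ⁻¹ • d))]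
        have e : (h' + W a + G₁ (σ⁻¹ • b)) - (h' + W c + G₁ (σ⁻¹ • d))
            = (W a - W c) + (G₁ (σ⁻¹ • b) - G₁ (σ⁻¹ • d)) := by abel
        rw [e, ← map_sub W a c, ← map_sub G₁ (σ⁻¹ • b) (σ⁻¹ • d),
          ← smul_sub σ⁻¹ b d, map_smul G₁ σ⁻¹ (b - d),
          smul_add σ (W (a - c)) (σ⁻¹ • G₁ (b - d)),
          smul_smul σ σ⁻¹ (G₁ (b - d)), mul_inv_cancel₀ hσ, one_smul]
      rw [key]
      have hb : ‖σ • (W (a - c)) + G₁ (b - d)‖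
          ≤ σ * (‖W‖ * ‖a - c‖) + ‖G₁‖ * ‖b - d‖ := by
        refine le_trans (norm_add_le _ _) ?_
        gcongr
        · rw [norm_smul σ (W (a - c)), Real.norm_eq_abs, abs_of_pos hσ0]
          gcongr
          exact W.le_opNorm _
        · exact G₁.le_opNorm _
      refine le_trans hb ?_
      rw [← dist_eq_norm, ← dist_eq_norm]
      have hKge : ‖G₁‖ + σ * ‖W‖ ≤ (K : ℝ) :=
        le_max_right (‖G₀‖ + σ * ‖W‖) (‖G₁‖ + σ * ‖W‖)
      nlinarith [norm_nonneg G₁, norm_nonneg W]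
  set x := hCW.fixedPoint F with hx
  have hfix : F x = x := hCW.fixedPoint_isFixedPt
  have hfix' : TT G₀ G₁ W σ h h' (x : EE n × EE n) = (x : EE n × EE n) :=
    congrArg Subtype.val hfix
  have hv1 : h + G₀ (x : EE n × EE n).1 = (x : EE n × EE n).1 := congrArg Prod.fst hfix'
  have hvderiv : ∀ t, HasDerivAt (⇑(x : EE n × EE n).1) ((σ⁻¹ • (x : EE n × EE n).2) t) t := x.2
  refine ⟨(x : EE n × EE n).1, σ⁻¹ • (x : EE n × EE n).2, hvderiv, ?_, ?_⟩
  · rw [sub_eq_iff_eq_add]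
    exact hv1.symm
  · intro w w' hw' hweq
    rw [sub_eq_iff_eq_add] at hweq
    have hweq' : h + G₀ w = w := hweq.symm
    have hwe : h' + W w + G₁ w' = w' := by
      apply DFunLike.ext
      intro t
      have hd := (hh t).add (hderiv w w' hw' t)
      have hd2 : HasDerivAt (⇑(h + G₀ w)) (h' t + (W w + G₁ w') t) t := hd
      rw [hweq'] at hd2
      have huniq := hd2.unique (hw' t)
      simpa [add_assoc] using huniq
    have hmem : (w, σ • w') ∈ S := by
      intro t
      show HasDerivAt (⇑w) ((σ⁻¹ • (σ • w')) t) t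
      rw [hcancel w']
      exact hw' t
    have hfw : F ⟨(w, σ • w'), hmem⟩ = ⟨(w, σ • w'), hmem⟩ := by
      apply Subtype.ext
      show TT G₀ G₁ W σ h h' (w, σ • w') = (w, σ • w')
      rw [TT]
      refine Prod.ext hweq' ?_
      show σ • (h' + W w + G₁ (σ⁻¹ • (σ • w'))) = σ • w'
      rw [hcancel w', hwe]
    have h1 := hCW.fixedPoint_unique (x := ⟨(w, σ • w'), hmem⟩) hfw
    have h2 : ((⟨(w, σ • w'), hmem⟩ : S) : EE n × EE n) = (x : EE n × EE n) := by
      rw [h1]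
    exact congrArg Prod.fst h2

set_option maxHeartbeats 1000000 in
set_option synthInstance.maxHeartbeats 400000 in
lemma aux_deriv_eq {n : ℕ} (G₀ G₁ W : EE n →L[ℝ] EE n)
    (hderiv : ∀ v v' : EE n,
      (∀ t, HasDerivAt (⇑v) (v' t) t) →
      ∀ t, HasDerivAt (⇑(G₀ v)) ((W v + G₁ v') t) t)
    (h h' v v' : EE n)
    (hh : ∀ t, HasDerivAt (⇑h) (h' t) t)
    (hv' : ∀ t, HasDerivAt (⇑v) (v' t) t)
    (heq : h + G₀ v = v) : h' + W v + G₁ v' = v' := by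
  apply DFunLike.ext
  intro t
  have hd := (hh t).add (hderiv v v' hv' t)
  have hd2 : HasDerivAt (⇑(h + G₀ v)) (h' t + (W v + G₁ v') t) t := hd
  rw [heq] at hd2
  have huniq := hd2.unique (hv' t)
  simpa [add_assoc] using huniq

set_option maxHeartbeats 2000000 in
set_option synthInstance.maxHeartbeats 400000 in
theorem dissipativity_contraction (n : ℕ)
    (G₀ G₁ W :
      BoundedContinuousFunction ℝ (EuclideanSpace ℝ (Fin n)) →L[ℝ]
        BoundedContinuousFunction ℝ (EuclideanSpace ℝ (Fin n)))
    (hderiv : ∀ v v' : BoundedContinuousFunction ℝ (EuclideanSpace ℝ (Fin n)),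
      (∀ t, HasDerivAt (⇑v) (v' t) t) →
      ∀ t, HasDerivAt (⇑(G₀ v)) ((W v + G₁ v') t) t)
    (hG₀ : ‖G₀‖ < 1) (hG₁ : ‖G₁‖ < 1) :
    ∃ σ : ℝ, 0 < σ ∧ σ < 1 ∧
      max (‖G₀‖ + σ * ‖W‖) ‖G₁‖ < 1 ∧
      (∀ v v' : BoundedContinuousFunction ℝ (EuclideanSpace ℝ (Fin n)),
        (∀ t, HasDerivAt (⇑v) (v' t) t) →
        ‖G₀ v‖ + σ * ‖W v + G₁ v'‖ ≤
          max (‖G₀‖ + σ * ‖W‖) ‖G₁‖ * (‖v‖ + σ * ‖v'‖)) ∧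
      (∀ h h' : BoundedContinuousFunction ℝ (EuclideanSpace ℝ (Fin n)),
        (∀ t, HasDerivAt (⇑h) (h' t) t) →
        (∃! v : BoundedContinuousFunction ℝ (EuclideanSpace ℝ (Fin n)),
          (∃ v' : BoundedContinuousFunction ℝ (EuclideanSpace ℝ (Fin n)),
            ∀ t, HasDerivAt (⇑v) (v' t) t) ∧ v - G₀ v = h) ∧
        ∀ v v' : BoundedContinuousFunction ℝ (EuclideanSpace ℝ (Fin n)),
          (∀ t, HasDerivAt (⇑v) (v' t) t) → v - G₀ v = h →
          ‖v‖ + ‖v'‖ ≤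
            (σ * (1 - max (‖G₀‖ + σ * ‖W‖) ‖G₁‖))⁻¹ * (‖h‖ + ‖h'‖)) := by
  classical
  set M : ℝ := max ‖G₀‖ ‖G₁‖ with hMdef
  have hM : M < 1 := max_lt hG₀ hG₁
  have hM0 : 0 ≤ M := le_trans (norm_nonneg G₀) (le_max_left _ _)
  have hWpos : (0:ℝ) < ‖W‖ + 1 := by positivity
  have hW0 : (0:ℝ) ≤ ‖W‖ := norm_nonneg W
  set σ : ℝ := min (1/2) ((1 - M) / (2 * (‖W‖ + 1))) with hσdef
  have hσ0 : 0 < σ := lt_min (by norm_num) (div_pos (by linarith) (by positivity))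
  have hσhalf : σ ≤ 1/2 := min_le_left _ _
  have hσ1 : σ < 1 := by linarith
  have hσW : σ * ‖W‖ ≤ (1 - M) / 2 := by
    have h2 : σ ≤ (1 - M) / (2 * (‖W‖ + 1)) := min_le_right _ _
    have h3 : σ * (‖W‖ + 1) ≤ ((1 - M) / (2 * (‖W‖ + 1))) * (‖W‖ + 1) :=
      mul_le_mul_of_nonneg_right h2 hWpos.le
    have h4 : ((1 - M) / (2 * (‖W‖ + 1))) * (‖W‖ + 1) = (1 - M) / 2 := by
      field_simp
    nlinarith
  have hA : ‖G₀‖ + σ * ‖W‖ < 1 := by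
    have : ‖G₀‖ ≤ M := le_max_left _ _
    nlinarith
  have hB : ‖G₁‖ + σ * ‖W‖ < 1 := by
    have : ‖G₁‖ ≤ M := le_max_right _ _
    nlinarith
  set γ : ℝ := max (‖G₀‖ + σ * ‖W‖) ‖G₁‖ with hγdef
  have hγ1 : γ < 1 := max_lt hA hG₁
  have hγ0 : 0 ≤ γ := le_trans (norm_nonneg G₁) (le_max_right _ _)
  have hcontr : ∀ v v' : EE n,
      ‖G₀ v‖ + σ * ‖W v + G₁ v'‖ ≤ γ * (‖v‖ + σ * ‖v'‖) := by
    intro v v'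
    have e1 : ‖G₀ v‖ ≤ ‖G₀‖ * ‖v‖ := G₀.le_opNorm v
    have e2 : ‖W v + G₁ v'‖ ≤ ‖W‖ * ‖v‖ + ‖G₁‖ * ‖v'‖ :=
      le_trans (norm_add_le _ _) (add_le_add (W.le_opNorm v) (G₁.le_opNorm v'))
    have g1 : ‖G₀‖ + σ * ‖W‖ ≤ γ := le_max_left _ _
    have g2 : ‖G₁‖ ≤ γ := le_max_right _ _
    have p1 : σ * ‖W v + G₁ v'‖ ≤ σ * (‖W‖ * ‖v‖ + ‖G₁‖ * ‖v'‖) :=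
      mul_le_mul_of_nonneg_left e2 hσ0.le
    have p2 : (‖G₀‖ + σ * ‖W‖) * ‖v‖ ≤ γ * ‖v‖ :=
      mul_le_mul_of_nonneg_right g1 (norm_nonneg v)
    have p3 : ‖G₁‖ * (σ * ‖v'‖) ≤ γ * (σ * ‖v'‖) :=
      mul_le_mul_of_nonneg_right g2 (by positivity)
    nlinarith
  refine ⟨σ, hσ0, hσ1, hγ1, fun v v' _ => hcontr v v', fun h h' hh => ?_⟩
  obtain ⟨v, v', hv', hveq, huniq⟩ := aux_solve G₀ G₁ W hderiv σ hσ0 hA hB h h' hh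
  constructor
  · refine ⟨v, ⟨⟨v', hv'⟩, hveq⟩, ?_⟩
    rintro w ⟨⟨w', hw'⟩, hweq⟩
    exact huniq w w' hw' hweq
  · intro u u' hu' hueq
    rw [sub_eq_iff_eq_add] at hueq
    have hueq' : h + G₀ u = u := hueq.symm
    have hwe : h' + W u + G₁ u' = u' :=
      aux_deriv_eq G₀ G₁ W hderiv h h' u u' hh hu' hueq'
    have b1 : ‖u‖ ≤ ‖h‖ + ‖G₀ u‖ := by
      conv_lhs => rw [← hueq']
      exact norm_add_le _ _
    have b2 : ‖u'‖ ≤ ‖h'‖ + ‖W u + G₁ u'‖ := by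
      conv_lhs => rw [← hwe, add_assoc]
      exact norm_add_le _ _
    have b3 := hcontr u u'
    have hX : ‖u‖ + σ * ‖u'‖ ≤ ‖h‖ + σ * ‖h'‖ + γ * (‖u‖ + σ * ‖u'‖) := by nlinarith
    rw [inv_mul_eq_div, le_div_iff₀ (by nlinarith : (0:ℝ) < σ * (1 - γ))]
    have c1 : σ * (‖u‖ + ‖u'‖) ≤ ‖u‖ + σ * ‖u'‖ := by nlinarith [norm_nonneg u]
    have c2 : (1 - γ) * (‖u‖ + σ * ‖u'‖) ≤ ‖h‖ + σ * ‖h'‖ := by nlinarith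
    have c3 : (1 - γ) * (σ * (‖u‖ + ‖u'‖)) ≤ (1 - γ) * (‖u‖ + σ * ‖u'‖) :=
      mul_le_mul_of_nonneg_left c1 (by linarith)
    have c4 : σ * ‖h'‖ ≤ ‖h'‖ := by nlinarith [norm_nonneg h']
    nlinarith
end

section
/- Let X be a Banach space, and let u : ℝ → X be bounded and uniformly continuous. Suppose that for every μ > 0 there exists a relatively dense set of τ ∈ ℝ with sup_t ‖u(t+τ) − u(t)‖ < μ. If moreover v : ℝ → X is defined by v = u' (assumed to exist, bounded, and uniformly continuous), then v is also almost periodic in the same sense. -/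
/-- Bohr almost periodicity for an `X`-valued function: for every `μ > 0` the set of
`μ`-almost periods is relatively dense. -/
def IsBohrAlmostPeriodic {X : Type*} [NormedAddCommGroup X] (u : ℝ → X) : Prop :=
  ∀ μ : ℝ, 0 < μ → ∃ l : ℝ, 0 < l ∧
    ∀ x : ℝ, ∃ τ ∈ Set.Icc x (x + l), ∀ t : ℝ, ‖u (t + τ) - u t‖ < μ

lemma quotient_close {X : Type*} [NormedAddCommGroup X] [NormedSpace ℝ X]
    (u v : ℝ → X) (hderiv : ∀ t, HasDerivAt u (v t) t)
    {a h ε : ℝ} (hh : 0 < h)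
    (hb : ∀ s ∈ Set.Icc a (a + h), ‖v s - v a‖ ≤ ε) :
    ‖u (a + h) - u a - h • v a‖ ≤ ε * h := by
  set s : Set ℝ := Set.Icc a (a + h)
  have hg : ∀ x ∈ s, HasDerivWithinAt (fun y => u y - y • v a) (v x - v a) s x := by
    intro x _
    have : HasDerivAt (fun y : ℝ => u y - y • v a) (v x - (1 : ℝ) • v a) x :=
      (hderiv x).sub ((hasDerivAt_id x).smul_const (v a))
    simpa using this.hasDerivWithinAt
  have has : a ∈ s := by constructor <;> [rfl; linarith]
  have hahs : a + h ∈ s := by constructor <;> [linarith; rfl]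
  have := (convex_Icc a (a + h)).norm_image_sub_le_of_norm_hasDerivWithin_le hg hb has hahs
  have heq : (fun y => u y - y • v a) (a + h) - (fun y => u y - y • v a) a
      = u (a + h) - u a - h • v a := by
    simp only [add_smul]
    abel
  rw [heq] at this
  simpa [abs_of_pos hh] using this

theorem derivative_almost_periodic
    {X : Type*} [NormedAddCommGroup X] [NormedSpace ℝ X]
    (u v : ℝ → X)
    (hub : ∃ C : ℝ, ∀ t, ‖u t‖ ≤ C) (huc : UniformContinuous u)
    (hap : IsBohrAlmostPeriodic u)
    (hderiv : ∀ t, HasDerivAt u (v t) t)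
    (hvb : ∃ C : ℝ, ∀ t, ‖v t‖ ≤ C) (hvc : UniformContinuous v) :
    IsBohrAlmostPeriodic v := by
  intro μ hμ
  have hε : 0 < μ / 4 := by linarith
  obtain ⟨δ, hδ, hδv⟩ := Metric.uniformContinuous_iff.mp hvc (μ / 4) hε
  set h := δ / 2 with hhdef
  have hh : 0 < h := by positivity
  have hbd : ∀ a : ℝ, ‖u (a + h) - u a - h • v a‖ ≤ (μ / 4) * h := by
    intro a
    refine quotient_close u v hderiv hh ?_
    intro s hs
    have : dist s a < δ := by
      rw [Real.dist_eq, abs_lt]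
      obtain ⟨h1, h2⟩ := hs
      constructor <;> [linarith; linarith]
    have := hδv this
    rw [dist_eq_norm] at this
    exact this.le
  obtain ⟨l, hl, hτ⟩ := hap (h * (μ / 4)) (by positivity)
  refine ⟨l, hl, fun x => ?_⟩
  obtain ⟨τ, hτmem, hτap⟩ := hτ x
  refine ⟨τ, hτmem, fun t => ?_⟩
  have key : ‖h • (v (t + τ) - v t)‖ < h * μ := by
    have e1 := hbd t
    have e2 := hbd (t + τ)
    have e3 := hτap (t + h)
    have e4 := hτap t
    have hid : h • (v (t + τ) - v t)
        = -(u (t + τ + h) - u (t + τ) - h • v (t + τ))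
          + (u (t + h) - u t - h • v t)
          + (u (t + h + τ) - u (t + h)) - (u (t + τ) - u t) := by
      have : t + τ + h = t + h + τ := by ring
      rw [this, smul_sub]
      abel
    calc ‖h • (v (t + τ) - v t)‖ ≤ ‖u (t + τ + h) - u (t + τ) - h • v (t + τ)‖
          + ‖u (t + h) - u t - h • v t‖ + ‖u (t + h + τ) - u (t + h)‖
          + ‖u (t + τ) - u t‖ := by
          rw [hid]
          refine le_trans (norm_sub_le _ _) ?_
          gcongr
          refine le_trans (norm_add_le _ _) ?_
          gcongr
          refine le_trans (norm_add_le _ _) ?_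
          gcongr
          exact (norm_neg _).le
      _ < (μ / 4) * h + (μ / 4) * h + h * (μ / 4) + h * (μ / 4) := by
          linarith
      _ = h * μ := by ring
  have : h * ‖v (t + τ) - v t‖ < h * μ := by
    rwa [norm_smul, Real.norm_eq_abs, abs_of_pos hh] at key
  exact lt_of_mul_lt_mul_left this hh.le
end
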